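/- Let C_out ⊆ F_{q^m}^N with partition N = Σ r_i. Then C_out is MSRD over F_q if and only if for all full-rank matrices A_i ∈ F_q^{r_i × n_i}, the global code C_out · diag(A_1,...,A_g) is maximally recoverable for the local codes generated by the A_i, i.e., it corrects every erasure pattern E with Σ_i Rk(A_i|_{R_i}) ≥ k, where k = log_{q^m}|C_out| and R_i is the set of unerased coordinates in block i. -/

import Mathlib

/-- Sum-rank weight of a block vector over `Fq`: sum over the blocks of the
`Fq`-rank of the block (i.e. the `Fq`-dimension of the span of its entries). -/
noncomputable def srWeight (Fq : Type*) [Field Fq] {F : Type*} [Field F] [Algebra Fq F]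
    {g : ℕ} {r : Fin g → ℕ} (c : ∀ i : Fin g, Fin (r i) → F) : ℕ :=
  ∑ i, Module.finrank Fq (Submodule.span Fq (Set.range (c i)))

/-- Minimum sum-rank distance of a (possibly nonlinear) code. -/
noncomputable def srMinDist (Fq : Type*) [Field Fq] {F : Type*} [Field F] [Algebra Fq F]
    {g : ℕ} {r : Fin g → ℕ} (C : Set (∀ i : Fin g, Fin (r i) → F)) : ℕ :=
  sInf {w | ∃ c ∈ C, ∃ d ∈ C, c ≠ d ∧ w = srWeight Fq (c - d)}

/-- Hamming weight of a block vector. -/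
noncomputable def hamWeight {F : Type*} [Field F] [DecidableEq F]
    {g : ℕ} {r : Fin g → ℕ} (c : ∀ i : Fin g, Fin (r i) → F) : ℕ :=
  ∑ i, (Finset.univ.filter fun j => c i j ≠ 0).card

/-- Minimum Hamming distance of a (possibly nonlinear) code. -/
noncomputable def hamMinDist {F : Type*} [Field F] [DecidableEq F]
    {g : ℕ} {r : Fin g → ℕ} (C : Set (∀ i : Fin g, Fin (r i) → F)) : ℕ :=
  sInf {w | ∃ c ∈ C, ∃ d ∈ C, c ≠ d ∧ w = hamWeight (c - d)}

/-- Blockwise multiplication of a block vector by a block-diagonal matrix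
`diag(A_1, …, A_g)` with entries in the subfield `Fq`. -/
noncomputable def blockMul {Fq F : Type*} [Field Fq] [Field F] [Algebra Fq F]
    {g : ℕ} {r n : Fin g → ℕ} (c : ∀ i : Fin g, Fin (r i) → F)
    (A : ∀ i : Fin g, Matrix (Fin (r i)) (Fin (n i)) Fq) :
    ∀ i : Fin g, Fin (n i) → F :=
  fun i j => ∑ t, c i t * algebraMap Fq F (A i t j)

/-- Rank of the submatrix of `A` given by the columns indexed by `R`. -/
noncomputable def colRank {Fq : Type*} [Field Fq] {a b : ℕ}
    (A : Matrix (Fin a) (Fin b) Fq) (R : Finset (Fin b)) : ℕ :=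
  (A.submatrix id (fun j : R => (j : Fin b))).rank

/-- Restriction of a block vector to the unerased coordinates `R_i` in each block. -/
def restrictTo {F : Type*} {g : ℕ} {n : Fin g → ℕ} (R : ∀ i : Fin g, Finset (Fin (n i)))
    (c : ∀ i : Fin g, Fin (n i) → F) : ∀ i : Fin g, (R i) → F :=
  fun i j => c i j.1

/-! If two codewords `c ≠ d` agree on the unerased coordinates after multiplication by
`diag(A_1, …, A_g)`, then in each block `(c - d)_i A_i` vanishes on the columns `R_i`, and
rank–nullity for `w ↦ Σ_t (c - d)_{i,t} w_t` gives `rk (c - d)_i + Rk(A_i|_{R_i}) ≤ r_i`;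
summing over the blocks, such a pair forces `d_SR ≤ N - k`. Conversely, for `c ≠ d` take
`A_i = [I | B_i]` with the columns of `B_i` a basis of that kernel and `R_i` the columns of
`B_i`: then `Σ_i Rk(A_i|_{R_i}) = N - wt_SR(c - d)`, both codewords agree on `R`, and the
identity block separates them, so maximal recoverability forces `wt_SR(c - d) > N - k`.
The remaining inequality `d_SR ≤ N - k + 1` is the Singleton bound, obtained by puncturing
on `k - 1` coordinates. -/

open Module Submodule Set Matrix

theorem hamWeight_le_sub_card_of_eq_zero {F : Type*} [Field F] [DecidableEq F] {g : ℕ}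
    {r : Fin g → ℕ} (c : ∀ i : Fin g, Fin (r i) → F) (T : Finset (Σ i : Fin g, Fin (r i)))
    (hT : ∀ p ∈ T, c p.1 p.2 = 0) :
    hamWeight c ≤ (∑ i, r i) - T.card := by
  have hsupport : hamWeight c
      = (Finset.univ.sigma fun i => Finset.univ.filter fun j => c i j ≠ 0).card := by
    rw [Finset.card_sigma]
    rfl
  calc hamWeight c ≤ Tᶜ.card := hsupport ▸ Finset.card_le_card fun p hp =>
        Finset.mem_compl.mpr fun hpT =>
          (Finset.mem_filter.mp (Finset.mem_sigma.mp hp).2).2 (hT p hpT)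
    _ = (∑ i, r i) - T.card := by simp [Finset.card_compl]

section

variable {Fq F : Type*} [Field Fq] [Field F] [Algebra Fq F]

theorem blockMul_sub_blockMul {g : ℕ} {r n : Fin g → ℕ} (c d : ∀ i : Fin g, Fin (r i) → F)
    (A : ∀ i : Fin g, Matrix (Fin (r i)) (Fin (n i)) Fq) (i : Fin g) (j : Fin (n i)) :
    blockMul c A i j - blockMul d A i j =
      Fintype.linearCombination Fq ((c - d) i) ((A i).col j) := by
  simp only [blockMul, Fintype.linearCombination_apply, Algebra.smul_def, Pi.sub_apply,
    Matrix.col_apply, ← Finset.sum_sub_distrib, sub_mul, mul_comm]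

theorem colRank_eq_finrank_span_image {a b : ℕ} (A : Matrix (Fin a) (Fin b) Fq)
    (R : Finset (Fin b)) :
    colRank A R = finrank Fq (span Fq (A.col '' R)) := by
  rw [colRank, Matrix.rank_eq_finrank_span_cols, Set.image_eq_range]
  rfl

variable (Fq) in
theorem finrank_span_range_add_finrank_ker {a : ℕ} (x : Fin a → F) :
    finrank Fq (span Fq (range x)) +
      finrank Fq (LinearMap.ker (Fintype.linearCombination Fq x)) = a := by
  rw [← Fintype.range_linearCombination, LinearMap.finrank_range_add_finrank_ker,
    finrank_fin_fun]

theorem finrank_span_range_add_colRank_le {a b : ℕ} (A : Matrix (Fin a) (Fin b) Fq)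
    (R : Finset (Fin b)) (x : Fin a → F)
    (hx : ∀ j ∈ R, Fintype.linearCombination Fq x (A.col j) = 0) :
    finrank Fq (span Fq (range x)) + colRank A R ≤ a := by
  have hcols : span Fq (A.col '' R) ≤ LinearMap.ker (Fintype.linearCombination Fq x) :=
    span_le.mpr fun _ ⟨j, hj, hAj⟩ => hAj ▸ hx j hj
  have hrank_nullity := finrank_span_range_add_finrank_ker Fq x
  have hker := Submodule.finrank_mono hcols
  rw [colRank_eq_finrank_span_image]
  omega

variable (Fq) in
theorem exists_fullRank_colRank_add_finrank_span_eq {a : ℕ} (x : Fin a → F) :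
    ∃ (b : ℕ) (A : Matrix (Fin a) (Fin b) Fq) (R : Finset (Fin b)),
      A.rank = a ∧ colRank A R + finrank Fq (span Fq (range x)) = a ∧
      (∀ j ∈ R, Fintype.linearCombination Fq x (A.col j) = 0) ∧
      ∀ y : Fin a → F, (∀ j, Fintype.linearCombination Fq y (A.col j) = 0) → y = 0 := by
  classical
  set K := LinearMap.ker (Fintype.linearCombination Fq x)
  let bK := Module.finBasis Fq K
  let cols : Fin (a + finrank Fq K) → Fin a → Fq :=
    Fin.append (fun t => Pi.single t 1) (fun s => (bK s : Fin a → Fq))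
  refine ⟨_, (Matrix.of cols)ᵀ, Finset.univ.map (Fin.natAddEmb a), ?_, ?_, ?_, ?_⟩
  · have hspan : span Fq (range cols) = ⊤ := by
      refine eq_top_iff.mpr ((Pi.basisFun Fq (Fin a)).span_eq.symm.le.trans (span_mono ?_))
      rintro _ ⟨t, rfl⟩
      exact ⟨Fin.castAdd _ t, by simp [cols]⟩
    rw [rank_eq_finrank_span_cols]
    change finrank Fq (span Fq (range cols)) = a
    rw [hspan, finrank_top, finrank_fin_fun]
  · have himage : (Matrix.of cols)ᵀ.col ''
        (Finset.univ.map (Fin.natAddEmb a) : Finset (Fin (a + finrank Fq K)))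
        = range (K.subtype ∘ bK) := by
      ext v
      simp [cols]
    rw [colRank_eq_finrank_span_image, himage,
      finrank_span_eq_card (bK.linearIndependent.map' K.subtype K.ker_subtype), Fintype.card_fin,
      add_comm]
    exact finrank_span_range_add_finrank_ker Fq x
  · intro j hj
    obtain ⟨s, -, rfl⟩ := Finset.mem_map.mp hj
    simp [cols]
  · intro y hy
    funext t
    simpa [cols] using hy (Fin.castAdd _ t)

theorem srWeight_sub_add_sum_colRank_le {g : ℕ} {r n : Fin g → ℕ}
    (A : ∀ i : Fin g, Matrix (Fin (r i)) (Fin (n i)) Fq) (R : ∀ i : Fin g, Finset (Fin (n i)))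
    {c d : ∀ i : Fin g, Fin (r i) → F}
    (hcd : restrictTo R (blockMul c A) = restrictTo R (blockMul d A)) :
    srWeight Fq (c - d) + ∑ i, colRank (A i) (R i) ≤ ∑ i, r i := by
  rw [srWeight, ← Finset.sum_add_distrib]
  refine Finset.sum_le_sum fun i _ =>
    finrank_span_range_add_colRank_le (A i) (R i) _ fun j hj => ?_
  rw [← blockMul_sub_blockMul, sub_eq_zero]
  exact congrFun (congrFun hcd i) ⟨j, hj⟩

theorem sum_lt_srWeight_sub_add_of_forall_injOn {g : ℕ} {r : Fin g → ℕ} (k : ℕ)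
    (C : Set (∀ i : Fin g, Fin (r i) → F))
    (H : ∀ (n : Fin g → ℕ) (A : ∀ i : Fin g, Matrix (Fin (r i)) (Fin (n i)) Fq),
        (∀ i, (A i).rank = r i) →
        ∀ R : ∀ i : Fin g, Finset (Fin (n i)),
          k ≤ ∑ i, colRank (A i) (R i) →
          Set.InjOn (restrictTo R) ((fun c => blockMul c A) '' C))
    {c d : ∀ i : Fin g, Fin (r i) → F} (hc : c ∈ C) (hd : d ∈ C) (hne : c ≠ d) :
    ∑ i, r i < srWeight Fq (c - d) + k := by
  choose n A R hrank hcolRank hvanish hinj using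
    fun i => exists_fullRank_colRank_add_finrank_span_eq Fq ((c - d) i)
  have hsum : ∑ i, colRank (A i) (R i) + srWeight Fq (c - d) = ∑ i, r i := by
    rw [srWeight, ← Finset.sum_add_distrib]
    exact Finset.sum_congr rfl fun i _ => hcolRank i
  by_contra hlt
  have hcdA : blockMul c A = blockMul d A := by
    refine H n A hrank R (by omega) ⟨c, hc, rfl⟩ ⟨d, hd, rfl⟩ ?_
    funext i j
    rw [restrictTo, restrictTo, ← sub_eq_zero, blockMul_sub_blockMul]
    exact hvanish i j j.2
  refine hne (funext fun i => sub_eq_zero.mp (hinj i ((c - d) i) fun j => ?_))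
  rw [← blockMul_sub_blockMul, hcdA, sub_self]

theorem finrank_span_range_le_card_ne_zero [DecidableEq F] {ι : Type*} [Fintype ι]
    (v : ι → F) :
    finrank Fq (span Fq (range v)) ≤ (Finset.univ.filter fun j => v j ≠ 0).card := by
  set S := Finset.univ.filter fun j => v j ≠ 0
  calc finrank Fq (span Fq (range v))
      ≤ finrank Fq (span Fq ((S.image v : Finset F) : Set F)) := by
        refine Submodule.finrank_mono (span_le.mpr ?_)
        rintro _ ⟨j, rfl⟩
        by_cases hj : v j = 0
        · simp [hj]
        · exact subset_span (Finset.mem_image_of_mem v (by simp [S, hj]))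
    _ ≤ (S.image v).card := finrank_span_finset_le_card _
    _ ≤ S.card := Finset.card_image_le

theorem srWeight_le_hamWeight [DecidableEq F] {g : ℕ} {r : Fin g → ℕ}
    (c : ∀ i : Fin g, Fin (r i) → F) : srWeight Fq c ≤ hamWeight c :=
  Finset.sum_le_sum fun i _ => finrank_span_range_le_card_ne_zero (c i)

theorem exists_ne_srWeight_sub_le_of_pow_lt_card [Fintype F] {g : ℕ} {r : Fin g → ℕ}
    (C : Set (∀ i : Fin g, Fin (r i) → F)) {s : ℕ} (hs : s ≤ ∑ i, r i)
    (hC : Fintype.card F ^ s < Nat.card C) :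
    ∃ c ∈ C, ∃ d ∈ C, c ≠ d ∧ srWeight Fq (c - d) ≤ (∑ i, r i) - s := by
  classical
  obtain ⟨T, -, hT⟩ := (Finset.univ : Finset (Σ i : Fin g, Fin (r i))).exists_subset_card_eq
    (n := s) (by simpa using hs)
  obtain ⟨⟨c, hc⟩, ⟨d, hd⟩, hne, hcd⟩ := Fintype.exists_ne_map_eq_of_card_lt
    (fun c : C => fun p : T => (c : ∀ i : Fin g, Fin (r i) → F) p.1.1 p.1.2)
    (by simpa [hT, Nat.card_eq_fintype_card] using hC)
  refine ⟨c, hc, d, hd, fun h => hne (Subtype.ext h), ?_⟩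
  calc srWeight Fq (c - d) ≤ hamWeight (c - d) := srWeight_le_hamWeight _
    _ ≤ (∑ i, r i) - T.card :=
      hamWeight_le_sub_card_of_eq_zero _ T fun p hp => sub_eq_zero.mpr (congrFun hcd ⟨p, hp⟩)
    _ = (∑ i, r i) - s := by rw [hT]

theorem srMinDist_le {g : ℕ} {r : Fin g → ℕ} {C : Set (∀ i : Fin g, Fin (r i) → F)}
    {c d : ∀ i : Fin g, Fin (r i) → F} (hc : c ∈ C) (hd : d ∈ C) (hne : c ≠ d) :
    srMinDist Fq C ≤ srWeight Fq (c - d) :=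
  Nat.sInf_le ⟨c, hc, d, hd, hne, rfl⟩

theorem le_srMinDist {g : ℕ} {r : Fin g → ℕ} {C : Set (∀ i : Fin g, Fin (r i) → F)}
    {D : ℕ} (hC : C.Nontrivial)
    (h : ∀ c ∈ C, ∀ d ∈ C, c ≠ d → D ≤ srWeight Fq (c - d)) :
    D ≤ srMinDist Fq C := by
  obtain ⟨c, hc, d, hd, hne⟩ := hC
  refine le_csInf ⟨_, c, hc, d, hd, hne, rfl⟩ ?_
  rintro _ ⟨c, hc, d, hd, hne, rfl⟩
  exact h c hc d hd hne

end

theorem msrd_iff_maximally_recoverable_general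
    {Fq F : Type*} [Field Fq] [Fintype Fq] [Field F] [Fintype F] [Algebra Fq F]
    {g : ℕ} {r : Fin g → ℕ} (k : ℕ) (hk : 1 ≤ k) (hkN : k ≤ ∑ i, r i)
    (Cout : Set (∀ i : Fin g, Fin (r i) → F))
    (hcard : Nat.card Cout = Fintype.card Fq ^ (Module.finrank Fq F * k)) :
    srMinDist Fq Cout = (∑ i, r i) - k + 1 ↔
      ∀ (n : Fin g → ℕ) (A : ∀ i : Fin g, Matrix (Fin (r i)) (Fin (n i)) Fq),
        (∀ i, (A i).rank = r i) →
        ∀ R : ∀ i : Fin g, Finset (Fin (n i)),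
          k ≤ ∑ i, colRank (A i) (R i) →
          Set.InjOn (restrictTo R) ((fun c => blockMul c A) '' Cout) := by
  constructor
  · rintro hdist n A - R hR _ ⟨c, hc, rfl⟩ _ ⟨d, hd, rfl⟩ hcd
    obtain rfl | hne := eq_or_ne c d
    · rfl
    have hwt := hdist ▸ srMinDist_le hc hd hne
    have hsum := srWeight_sub_add_sum_colRank_le A R hcd
    omega
  · intro H
    have hcardCout : Fintype.card F ^ (k - 1) < Nat.card Cout := by
      rw [hcard, Module.card_eq_pow_finrank (K := Fq) (V := F), ← pow_mul]
      exact Nat.pow_lt_pow_right Fintype.one_lt_card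
        (Nat.mul_lt_mul_of_pos_left (by omega) Module.finrank_pos)
    obtain ⟨c, hc, d, hd, hne, hcd⟩ :=
      exists_ne_srWeight_sub_le_of_pow_lt_card (Fq := Fq) Cout (by omega : k - 1 ≤ _) hcardCout
    refine le_antisymm ((srMinDist_le hc hd hne).trans (by omega))
      (le_srMinDist ⟨c, hc, d, hd, hne⟩ fun c hc d hd hne => ?_)
    have hwt := sum_lt_srWeight_sub_add_of_forall_injOn k Cout H hc hd hne
    omega

/-- a code `C_out ⊆ F_{q^m}^N` of cardinality `(q^m)^k` is MSRD over
`F_q` for the partition `N = Σ r_i` iff for all full-rank matrices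
`A_i ∈ F_q^{r_i × n_i}` the global code `C_out · diag(A_1,…,A_g)` is maximally
recoverable: it corrects every erasure pattern whose unerased coordinates `R_i`
satisfy `Σ_i Rk(A_i|_{R_i}) ≥ k`. -/
theorem msrd_iff_maximally_recoverable
    {Fq F : Type*} [Field Fq] [Fintype Fq] [Field F] [Fintype F] [Algebra Fq F]
    {g : ℕ} {r : Fin g → ℕ} (k : ℕ) (hk : 1 ≤ k) (hkN : k ≤ ∑ i, r i)
    (Cout : Set (∀ i : Fin g, Fin (r i) → F)) (hC : Cout.Nontrivial)
    (hcard : Nat.card Cout = Fintype.card Fq ^ (Module.finrank Fq F * k)) :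
    srMinDist Fq Cout = (∑ i, r i) - k + 1 ↔
      ∀ (n : Fin g → ℕ) (A : ∀ i : Fin g, Matrix (Fin (r i)) (Fin (n i)) Fq),
        (∀ i, (A i).rank = r i) →
        ∀ R : ∀ i : Fin g, Finset (Fin (n i)),
          k ≤ ∑ i, colRank (A i) (R i) →
          Set.InjOn (restrictTo R) ((fun c => blockMul c A) '' Cout) :=
  msrd_iff_maximally_recoverable_general k hk hkN Cout hcard
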